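/- arXiv:1308.4040 — 5 statements merged into one kernel-verified Lean document; each statement's English description precedes it below -/
import Mathlib

section
/- Let N be an odd positive integer and n = 8N. Then there are no integers x, y, z such that x^4 + y^4 + z^4 - 2x^2y^2 - 2y^2z^2 - 2z^2x^2 = n. -/
/-!
Up to sign the form is Heron's product
`(x + y + z) (-x + y + z) (x - y + z) (x + y - z)`, and its four factors differ pairwise by even
numbers, so they share a parity. Hence the form is either odd or divisible by `2 ^ 4 = 16`,
whereas `8 N` with `N` odd is even and not divisible by `16`.
-/

lemma heron_form_eq_neg_mul (x y z : ℤ) :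
    x^4 + y^4 + z^4 - 2*x^2*y^2 - 2*y^2*z^2 - 2*z^2*x^2 =
      -((x + y + z) * (x + y + z - 2 * x) * (x + y + z - 2 * y) * (x + y + z - 2 * z)) := by
  ring

lemma odd_or_sixteen_dvd_mul_sub_two_mul (a x y z : ℤ) :
    Odd (a * (a - 2 * x) * (a - 2 * y) * (a - 2 * z)) ∨
      16 ∣ a * (a - 2 * x) * (a - 2 * y) * (a - 2 * z) := by
  rcases Int.even_or_odd a with ha | ha
  · right
    have ha : 2 ∣ a := ha.two_dvd
    have hsub (t : ℤ) : 2 ∣ a - 2 * t := dvd_sub ha (dvd_mul_right 2 t)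
    exact mul_dvd_mul (mul_dvd_mul (mul_dvd_mul ha (hsub x)) (hsub y)) (hsub z)
  · left
    have hsub (t : ℤ) : Odd (a - 2 * t) := ha.sub_even (even_two_mul t)
    exact ((ha.mul (hsub x)).mul (hsub y)).mul (hsub z)

theorem stmt5_general (N : ℤ) (hodd : Odd N) (n : ℤ) (hn : n = 8 * N) :
    ¬ ∃ x y z : ℤ, x^4 + y^4 + z^4 - 2*x^2*y^2 - 2*y^2*z^2 - 2*z^2*x^2 = n := by
  rintro ⟨x, y, z, h⟩
  rw [heron_form_eq_neg_mul, hn] at h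
  rcases odd_or_sixteen_dvd_mul_sub_two_mul (x + y + z) x y z with hP | hP
  · have h8N : Odd (8 * N) := h ▸ hP.neg
    exact Int.not_odd_iff_even.2 ⟨4 * N, by ring⟩ h8N
  · have h16 : 8 * 2 ∣ 8 * N := by simpa [h] using (dvd_neg.2 hP)
    exact Int.not_even_iff_odd.2 hodd
      (even_iff_two_dvd.2 ((mul_dvd_mul_iff_left (by norm_num)).1 h16))

theorem stmt5 (N : ℤ) (hN : 0 < N) (hodd : Odd N) (n : ℤ) (hn : n = 8 * N) :
    ¬ ∃ x y z : ℤ, x^4 + y^4 + z^4 - 2*x^2*y^2 - 2*y^2*z^2 - 2*z^2*x^2 = n :=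
  stmt5_general N hodd n hn
end

section
/- There are no integers x, y, z with x^4 + y^4 + z^4 - 2x^2y^2 - 2y^2z^2 - 2z^2x^2 = 24. -/
/-!
The left-hand side is minus Heron's product `(x+y+z)(-x+y+z)(x-y+z)(x+y-z)`. Its four factors
differ pairwise by `2x`, `2y` or `2z`, so they all have the same parity: the product is either
odd or divisible by `2^4 = 16`, and `24` is neither.
-/

theorem neg_heron_product (x y z : ℤ) :
    x^4 + y^4 + z^4 - 2*x^2*y^2 - 2*y^2*z^2 - 2*z^2*x^2
      = -((x + y + z) * (-x + y + z) * (x - y + z) * (x + y - z)) := by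
  ring

theorem Int.odd_mul_or_sixteen_dvd_mul_of_even_iff {a b c d : ℤ}
    (hb : Even a ↔ Even b) (hc : Even a ↔ Even c) (hd : Even a ↔ Even d) :
    Odd (a * b * c * d) ∨ 16 ∣ a * b * c * d := by
  rcases Int.even_or_odd a with ha | ha
  · right
    obtain ⟨a', rfl⟩ := ha
    obtain ⟨b', rfl⟩ := hb.mp ⟨a', rfl⟩
    obtain ⟨c', rfl⟩ := hc.mp ⟨a', rfl⟩
    obtain ⟨d', rfl⟩ := hd.mp ⟨a', rfl⟩
    exact ⟨a' * b' * c' * d', by ring⟩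
  · left
    have hodd {e : ℤ} (he : Even a ↔ Even e) : Odd e :=
      Int.not_even_iff_odd.mp fun h ↦ Int.not_even_iff_odd.mpr ha (he.mpr h)
    exact ((ha.mul (hodd hb)).mul (hodd hc)).mul (hodd hd)

theorem stmt6 :
    ¬ ∃ x y z : ℤ, x^4 + y^4 + z^4 - 2*x^2*y^2 - 2*y^2*z^2 - 2*z^2*x^2 = 24 := by
  rintro ⟨x, y, z, h⟩
  rw [neg_heron_product] at h
  have same_parity {a b : ℤ} (t : ℤ) (hab : a - b = 2 * t) : Even a ↔ Even b :=
    Int.even_sub.mp (hab ▸ even_two_mul t)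
  rcases Int.odd_mul_or_sixteen_dvd_mul_of_even_iff (a := x + y + z) (b := -x + y + z)
      (c := x - y + z) (d := x + y - z)
      (same_parity x (by ring)) (same_parity y (by ring)) (same_parity z (by ring))
    with hodd | hdvd
  · rw [neg_eq_iff_eq_neg.mp h] at hodd
    exact absurd hodd (by decide)
  · omega
end

section
/- Let n be a positive integer. The equation x^4 + y^4 + z^4 - 2x^2y^2 - 2y^2z^2 - 2z^2x^2 = n has an integer solution if and only if there exist positive integers a, b, c, d with a + d = b + c, a*b*c*d = n, and a ≡ b ≡ c ≡ d (mod 2). -/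
/-!
The form factors as `(x+y+z)(x+y-z)(x-y+z)(x-y-z)`, and the four factors `a, b, c, d` satisfy
`a + d = b + c` and have pairwise even differences `2x, 2y, 2z`; conversely any such quadruple
arises from `x = (a+d)/2`, `y = (a-c)/2`, `z = (a-b)/2`. The form is symmetric and even in each
variable, so for a solution we may take `x ≥ y ≥ z ≥ 0`; then the first three factors are
nonnegative, and positivity of the product makes all four positive.
-/

def quarticForm (x y z : ℤ) : ℤ :=
  x^4 + y^4 + z^4 - 2*x^2*y^2 - 2*y^2*z^2 - 2*z^2*x^2

def IsBalancedFactorization (n a b c d : ℤ) : Prop :=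
  0 < a ∧ 0 < b ∧ 0 < c ∧ 0 < d ∧ a + d = b + c ∧ a * b * c * d = n ∧
    a % 2 = b % 2 ∧ b % 2 = c % 2 ∧ c % 2 = d % 2

namespace quarticForm

theorem eq_mul (x y z : ℤ) :
    quarticForm x y z = (x + y + z) * (x + y - z) * (x - y + z) * (x - y - z) := by
  unfold quarticForm; ring

theorem comm_left (x y z : ℤ) : quarticForm y x z = quarticForm x y z := by
  unfold quarticForm; ring

theorem comm_right (x y z : ℤ) : quarticForm x z y = quarticForm x y z := by
  unfold quarticForm; ring

theorem comm_outer (x y z : ℤ) : quarticForm z y x = quarticForm x y z := by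
  unfold quarticForm; ring

theorem abs_abs_abs (x y z : ℤ) : quarticForm |x| |y| |z| = quarticForm x y z := by
  have h4 (t : ℤ) : |t| ^ 4 = t ^ 4 := (by decide : Even 4).pow_abs t
  simp only [quarticForm, h4, sq_abs]

end quarticForm

theorem factors_pos_of_sorted {R : Type*} [CommRing R] [LinearOrder R] [IsStrictOrderedRing R]
    {x y z : R} (hz : 0 ≤ z) (hzy : z ≤ y) (hyx : y ≤ x)
    (h : 0 < (x + y + z) * (x + y - z) * (x - y + z) * (x - y - z)) :
    0 < x + y + z ∧ 0 < x + y - z ∧ 0 < x - y + z ∧ 0 < x - y - z := by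
  have ha : 0 ≤ x + y + z := by linarith
  have hb : 0 ≤ x + y - z := by linarith
  have hc : 0 ≤ x - y + z := by linarith
  have habc : 0 ≤ (x + y + z) * (x + y - z) * (x - y + z) := by positivity
  obtain ⟨habc, hd⟩ := (pos_and_pos_or_neg_and_neg_of_mul_pos h).resolve_right
    (fun h' => h'.1.not_ge habc)
  refine ⟨ha.lt_of_ne ?_, hb.lt_of_ne ?_, hc.lt_of_ne ?_, hd⟩ <;>
    rintro h0 <;> rw [← h0] at habc <;> simp at habc

theorem isBalancedFactorization_of_sorted {n x y z : ℤ} (hn : 0 < n) (hz : 0 ≤ z) (hzy : z ≤ y)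
    (hyx : y ≤ x) (h : quarticForm x y z = n) :
    IsBalancedFactorization n (x + y + z) (x + y - z) (x - y + z) (x - y - z) := by
  rw [quarticForm.eq_mul] at h
  obtain ⟨ha, hb, hc, hd⟩ := factors_pos_of_sorted hz hzy hyx (h ▸ hn)
  exact ⟨ha, hb, hc, hd, by ring, h, by omega, by omega, by omega⟩

theorem exists_isBalancedFactorization {n x y z : ℤ} (hn : 0 < n) (hx : 0 ≤ x) (hy : 0 ≤ y)
    (hz : 0 ≤ z) (h : quarticForm x y z = n) : ∃ a b c d, IsBalancedFactorization n a b c d := by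
  wlog hyx : y ≤ x generalizing x y
  · exact this hy hx (by rwa [quarticForm.comm_left]) (by linarith)
  wlog hzx : z ≤ x generalizing x z
  · exact this hx hz (by rwa [quarticForm.comm_outer]) (by linarith) (by linarith)
  wlog hzy : z ≤ y generalizing y z
  · exact this hz hy (by rwa [quarticForm.comm_right]) hzx hyx (by linarith)
  exact ⟨_, _, _, _, isBalancedFactorization_of_sorted hn hz hzy hyx h⟩

theorem exists_quarticForm_eq_of_isBalancedFactorization {n a b c d : ℤ}
    (h : IsBalancedFactorization n a b c d) : ∃ x y z, quarticForm x y z = n := by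
  obtain ⟨-, -, -, -, hsum, hprod, hab, hbc, hcd⟩ := h
  refine ⟨(a + d) / 2, (a - c) / 2, (a - b) / 2, ?_⟩
  rw [quarticForm.eq_mul, ← hprod]
  congr 3 <;> omega

theorem stmt9 (n : ℕ) (hn : 0 < n) :
    (∃ x y z : ℤ, x^4 + y^4 + z^4 - 2*x^2*y^2 - 2*y^2*z^2 - 2*z^2*x^2 = (n : ℤ)) ↔
    (∃ a b c d : ℤ, 0 < a ∧ 0 < b ∧ 0 < c ∧ 0 < d ∧
      a + d = b + c ∧ a * b * c * d = (n : ℤ) ∧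
      a % 2 = b % 2 ∧ b % 2 = c % 2 ∧ c % 2 = d % 2) := by
  change (∃ x y z, quarticForm x y z = n) ↔ ∃ a b c d, IsBalancedFactorization n a b c d
  refine ⟨fun ⟨x, y, z, h⟩ => ?_,
    fun ⟨_, _, _, _, h⟩ => exists_quarticForm_eq_of_isBalancedFactorization h⟩
  rw [← quarticForm.abs_abs_abs] at h
  exact exists_isBalancedFactorization (by exact_mod_cast hn) (abs_nonneg x) (abs_nonneg y)
    (abs_nonneg z) h
end

section
/- Let p and q be distinct primes. Then there are no integers x, y, z with x^4 + y^4 + z^4 - 2x^2y^2 - 2y^2z^2 - 2z^2x^2 = p*q. -/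
/-!
The quartic form factors as `(x + y + z)(-x - y + z)(-x + y - z)(x - y - z)`, a product of
four integers with sum zero. If this product is `p * q`, either one factor is `±pq` and the
other three are `±1`, so the sum cannot vanish since `pq ≥ 4`; or two factors are `±p` and
`±q` and the other two are `±1`, and a vanishing sum would force `p = q` or a negative product.
-/

theorem quartic_eq_prod (x y z : ℤ) :
    x^4 + y^4 + z^4 - 2*x^2*y^2 - 2*y^2*z^2 - 2*z^2*x^2 =
      (x + y + z) * (-x - y + z) * (-x + y - z) * (x - y - z) := by
  ring

section

variable {a b c d : ℤ}

theorem Int.eq_one_or_neg_one_of_mul_mul_mul_eq_one (h : a * b * c * d = 1) :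
    (a = 1 ∨ a = -1) ∧ (b = 1 ∨ b = -1) ∧ (c = 1 ∨ c = -1) ∧ (d = 1 ∨ d = -1) := by
  have hu : IsUnit (a * b * c * d) := h ▸ isUnit_one
  simpa only [IsUnit.mul_iff, Int.isUnit_iff, and_assoc] using hu

theorem add_add_add_ne_zero_of_dvd_of_mul_eq {n : ℤ} (hn : 4 ≤ n)
    (hprod : a * b * c * d = n) (hna : n ∣ a) : a + b + c + d ≠ 0 := by
  obtain ⟨t, rfl⟩ := hna
  have hunit : t * b * c * d = 1 :=
    mul_left_cancel₀ (by positivity) (by linear_combination hprod)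
  obtain ⟨ht | ht, hb | hb, hc | hc, hd | hd⟩ :=
    Int.eq_one_or_neg_one_of_mul_mul_mul_eq_one hunit <;>
    subst ht hb hc hd <;> omega

-- Here `a, b, c, d = ±p, ±q, ±1, ±1`; a positive product excludes `±(p - q) ± 2 = 0`.
theorem add_add_add_ne_zero_of_dvd_of_dvd_of_mul_eq {p q : ℤ} (hp : 0 < p) (hq : 0 < q)
    (hpq : p ≠ q) (hprod : a * b * c * d = p * q) (hpa : p ∣ a) (hqb : q ∣ b) :
    a + b + c + d ≠ 0 := by
  obtain ⟨s, rfl⟩ := hpa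
  obtain ⟨t, rfl⟩ := hqb
  have hunit : s * t * c * d = 1 :=
    mul_left_cancel₀ (by positivity : p * q ≠ 0) (by linear_combination hprod)
  obtain ⟨hs | hs, ht | ht, hc | hc, hd | hd⟩ :=
    Int.eq_one_or_neg_one_of_mul_mul_mul_eq_one hunit <;>
    subst hs ht hc hd <;> omega

variable {p q : ℕ} (hp : p.Prime) (hq : q.Prime) (hpq : p ≠ q)
include hp hq hpq

theorem add_add_add_ne_zero_of_prime_dvd (hprod : a * b * c * d = p * q) (hpa : (p : ℤ) ∣ a) :
    a + b + c + d ≠ 0 := by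
  have hp0 : (0 : ℤ) < p := mod_cast hp.pos
  have hq0 : (0 : ℤ) < q := mod_cast hq.pos
  have hpq' : (p : ℤ) ≠ q := mod_cast hpq
  have hQ : Prime (q : ℤ) := Nat.prime_iff_prime_int.mp hq
  have hqdvd : (q : ℤ) ∣ a * b * c * d := hprod ▸ dvd_mul_left _ _
  rw [hQ.dvd_mul, hQ.dvd_mul, hQ.dvd_mul] at hqdvd
  rcases hqdvd with ((hqa | hqb) | hqc) | hqd
  · have hcop : IsCoprime (p : ℤ) q :=
      Nat.isCoprime_iff_coprime.mpr ((Nat.coprime_primes hp hq).mpr hpq)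
    have h4 : (4 : ℤ) ≤ p * q := mod_cast Nat.mul_le_mul hp.two_le hq.two_le
    exact add_add_add_ne_zero_of_dvd_of_mul_eq h4 hprod (hcop.mul_dvd hpa hqa)
  · exact add_add_add_ne_zero_of_dvd_of_dvd_of_mul_eq hp0 hq0 hpq' hprod hpa hqb
  · intro hsum
    exact add_add_add_ne_zero_of_dvd_of_dvd_of_mul_eq (a := a) (b := c) (c := b) (d := d)
      hp0 hq0 hpq' (by linear_combination hprod) hpa hqc (by linear_combination hsum)
  · intro hsum
    exact add_add_add_ne_zero_of_dvd_of_dvd_of_mul_eq (a := a) (b := d) (c := b) (d := c)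
      hp0 hq0 hpq' (by linear_combination hprod) hpa hqd (by linear_combination hsum)

theorem add_add_add_ne_zero_of_mul_eq_prime_mul_prime (hprod : a * b * c * d = p * q) :
    a + b + c + d ≠ 0 := by
  have hP : Prime (p : ℤ) := Nat.prime_iff_prime_int.mp hp
  have hpdvd : (p : ℤ) ∣ a * b * c * d := hprod ▸ dvd_mul_right _ _
  rw [hP.dvd_mul, hP.dvd_mul, hP.dvd_mul] at hpdvd
  intro hsum
  rcases hpdvd with ((hpa | hpb) | hpc) | hpd
  · exact add_add_add_ne_zero_of_prime_dvd hp hq hpq hprod hpa hsum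
  · exact add_add_add_ne_zero_of_prime_dvd (a := b) (b := a) (c := c) (d := d) hp hq hpq
      (by linear_combination hprod) hpb (by linear_combination hsum)
  · exact add_add_add_ne_zero_of_prime_dvd (a := c) (b := a) (c := b) (d := d) hp hq hpq
      (by linear_combination hprod) hpc (by linear_combination hsum)
  · exact add_add_add_ne_zero_of_prime_dvd (a := d) (b := a) (c := b) (d := c) hp hq hpq
      (by linear_combination hprod) hpd (by linear_combination hsum)

end

theorem stmt12 (p q : ℕ) (hp : p.Prime) (hq : q.Prime) (hpq : p ≠ q) :
    ¬ ∃ x y z : ℤ, x^4 + y^4 + z^4 - 2*x^2*y^2 - 2*y^2*z^2 - 2*z^2*x^2 = (p : ℤ) * q := by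
  rintro ⟨x, y, z, h⟩
  rw [quartic_eq_prod] at h
  exact add_add_add_ne_zero_of_mul_eq_prime_mul_prime hp hq hpq h (by ring)
end

section
/- Let p be an odd prime. Every integer solution (x, y, z) of x^4 + y^4 + z^4 - 2x^2y^2 - 2y^2z^2 - 2z^2x^2 = p^2 satisfies: one of |x|, |y|, |z| equals 0, another equals (p-1)/2, and the remaining one equals (p+1)/2. -/
/-!
The quartic factors as `(x² - (y + z)²) * (x² - (y - z)²)`, and the two factors differ by `4yz`.
Their product is `p²`, so either they are equal, whence `yz = 0`, or one of them is `±1`. In the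
latter case `x² - w² = ±1` forces `x = 0` or `w = 0`, and `w = 0` is impossible because it makes the
first factor `x² = 1` and the other one at most `1`. Hence some variable vanishes and the equation
becomes `(u² - v²)² = p²`, i.e. `(|u| + |v|) * (|u| - |v|) = ±p`; since `|u| + |v|` is the larger
factor in absolute value, `|u| + |v| = p` and `||u| - |v|| = 1`.
-/

open Equiv

namespace Int

theorem eq_zero_or_eq_zero_of_abs_sq_sub_sq_eq_one {x w : ℤ} (h : |x ^ 2 - w ^ 2| = 1) :
    x = 0 ∨ w = 0 := by
  have hmul : (x - w).natAbs * (x + w).natAbs = 1 := by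
    rw [← natAbs_mul, ← natAbs_abs, show (x - w) * (x + w) = x ^ 2 - w ^ 2 by ring, h]; rfl
  obtain ⟨h₁, h₂⟩ := mul_eq_one.mp hmul
  omega

theorem eq_or_abs_eq_one_of_mul_eq_prime_sq {p : ℕ} (hp : p.Prime) {u v : ℤ}
    (h : u * v = (p : ℤ) ^ 2) : u = v ∨ |u| = 1 ∨ |v| = 1 := by
  have hnat : u.natAbs * v.natAbs = p ^ 2 := by
    rw [← natAbs_mul, h, natAbs_pow, natAbs_natCast]
  obtain ⟨i, hi, hu⟩ := (Nat.dvd_prime_pow hp).mp (Dvd.intro _ hnat)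
  interval_cases i
  · exact Or.inr (Or.inl (by rw [abs_eq_natAbs, hu]; rfl))
  · have huv : u.natAbs = v.natAbs := by
      rw [hu, pow_one, sq] at hnat
      rw [hu, pow_one, Nat.eq_of_mul_eq_mul_left hp.pos hnat]
    refine Or.inl ((natAbs_eq_natAbs_iff.mp huv).resolve_right fun hneg => ?_)
    subst hneg
    have : (0 : ℤ) < (p : ℤ) ^ 2 := by have := hp.pos; positivity
    nlinarith [sq_nonneg v]
  · have hv : v.natAbs = 1 := by
      rw [hu] at hnat
      exact (Nat.mul_eq_left (pow_pos hp.pos 2).ne').mp hnat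
    exact Or.inr (Or.inr (by rw [abs_eq_natAbs, hv]; rfl))

theorem eq_zero_of_abs_sq_sub_sq_eq_one_of_mul_eq {x s t m : ℤ}
    (h : (x ^ 2 - s ^ 2) * (x ^ 2 - t ^ 2) = m) (hm : 1 < m) (hs : |x ^ 2 - s ^ 2| = 1) :
    x = 0 := by
  refine (eq_zero_or_eq_zero_of_abs_sq_sub_sq_eq_one hs).resolve_right fun hs0 => ?_
  subst hs0
  rw [zero_pow two_ne_zero, sub_zero, abs_of_nonneg (sq_nonneg x)] at hs
  rw [zero_pow two_ne_zero, sub_zero, hs, one_mul] at h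
  nlinarith [sq_nonneg t]

theorem eq_half_of_sq_sub_sq_eq_prime {p : ℕ} (hp : p.Prime) {a b : ℤ} (ha : 0 ≤ a)
    (hb : 0 ≤ b) (h : a ^ 2 - b ^ 2 = p) : a = (p + 1) / 2 ∧ b = (p - 1) / 2 := by
  have hfac : (a + b) * (a - b) = p := by rw [← h]; ring
  have hdvd : (a + b).natAbs ∣ p := by
    rw [← natAbs_natCast p, ← hfac, natAbs_mul]; exact dvd_mul_right _ _
  have hp2 := hp.two_le
  rcases hp.eq_one_or_self_of_dvd _ hdvd with hs | hs
  · have : a + b = 1 := by omega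
    rw [this, one_mul] at hfac
    omega
  · have hsum : a + b = p := by omega
    rw [hsum] at hfac
    have : a - b = 1 := by
      have hp0 : (p : ℤ) ≠ 0 := by exact_mod_cast hp.ne_zero
      exact (mul_right_eq_self₀.mp hfac).resolve_right hp0
    omega

theorem abs_eq_half_of_sq_sub_sq_sq_eq_prime_sq {p : ℕ} (hp : p.Prime) {u v : ℤ}
    (h : (u ^ 2 - v ^ 2) ^ 2 = (p : ℤ) ^ 2) :
    (|u| = (p - 1) / 2 ∧ |v| = (p + 1) / 2) ∨ (|u| = (p + 1) / 2 ∧ |v| = (p - 1) / 2) := by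
  rcases sq_eq_sq_iff_eq_or_eq_neg.mp h with hpos | hneg
  · exact Or.inr (eq_half_of_sq_sub_sq_eq_prime hp (abs_nonneg u) (abs_nonneg v)
      (by rw [sq_abs, sq_abs, hpos]))
  · exact Or.inl (eq_half_of_sq_sub_sq_eq_prime hp (abs_nonneg v) (abs_nonneg u)
      (by rw [sq_abs, sq_abs]; linarith)).symm

theorem eq_zero_or_eq_zero_or_eq_zero_of_quartic_eq_prime_sq {p : ℕ} (hp : p.Prime)
    {x y z : ℤ}
    (h : x^4 + y^4 + z^4 - 2*x^2*y^2 - 2*y^2*z^2 - 2*z^2*x^2 = (p : ℤ)^2) :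
    x = 0 ∨ y = 0 ∨ z = 0 := by
  have hfac : (x ^ 2 - (y + z) ^ 2) * (x ^ 2 - (y - z) ^ 2) = (p : ℤ) ^ 2 := by
    linear_combination h
  have hp1 : 1 < (p : ℤ) ^ 2 := by
    have : (2 : ℤ) ≤ p := by exact_mod_cast hp.two_le
    nlinarith
  rcases eq_or_abs_eq_one_of_mul_eq_prime_sq hp hfac with heq | hu | hv
  · have : y * z = 0 := by linarith
    exact Or.inr (mul_eq_zero.mp this)
  · exact Or.inl (eq_zero_of_abs_sq_sub_sq_eq_one_of_mul_eq hfac hp1 hu)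
  · rw [mul_comm] at hfac
    exact Or.inl (eq_zero_of_abs_sq_sub_sq_eq_one_of_mul_eq hfac hp1 hv)

end Int

theorem exists_perm_comp_eq_of_eq_zero {a b c m n : ℤ}
    (h : a = 0 ∧ (b = m ∧ c = n ∨ b = n ∧ c = m) ∨ b = 0 ∧ (a = m ∧ c = n ∨ a = n ∧ c = m) ∨
      c = 0 ∧ (a = m ∧ b = n ∨ a = n ∧ b = m)) :
    ∃ σ : Perm (Fin 3), ![a, b, c] ∘ σ = ![0, m, n] := by
  rcases h with ⟨rfl, ⟨rfl, rfl⟩ | ⟨rfl, rfl⟩⟩ | ⟨rfl, ⟨rfl, rfl⟩ | ⟨rfl, rfl⟩⟩ |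
    ⟨rfl, ⟨rfl, rfl⟩ | ⟨rfl, rfl⟩⟩
  exacts [⟨1, rfl⟩, ⟨swap 1 2, by ext i; fin_cases i <;> rfl⟩,
    ⟨swap 0 1, by ext i; fin_cases i <;> rfl⟩, ⟨swap 0 1 * swap 1 2, by ext i; fin_cases i <;> rfl⟩,
    ⟨swap 0 2 * swap 1 2, by ext i; fin_cases i <;> rfl⟩, ⟨swap 0 2, by ext i; fin_cases i <;> rfl⟩]

theorem stmt14_general (p : ℕ) (hp : p.Prime) (x y z : ℤ)
    (h : x^4 + y^4 + z^4 - 2*x^2*y^2 - 2*y^2*z^2 - 2*z^2*x^2 = (p : ℤ)^2) :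
    ∃ σ : Equiv.Perm (Fin 3),
      (![|x|, |y|, |z|] ∘ σ) = ![0, ((p : ℤ) - 1) / 2, ((p : ℤ) + 1) / 2] := by
  apply exists_perm_comp_eq_of_eq_zero
  rcases Int.eq_zero_or_eq_zero_or_eq_zero_of_quartic_eq_prime_sq hp h with rfl | rfl | rfl
  · exact Or.inl ⟨abs_zero,
      Int.abs_eq_half_of_sq_sub_sq_sq_eq_prime_sq hp (by linear_combination h)⟩
  · exact Or.inr (Or.inl ⟨abs_zero,
      Int.abs_eq_half_of_sq_sub_sq_sq_eq_prime_sq hp (by linear_combination h)⟩)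
  · exact Or.inr (Or.inr ⟨abs_zero,
      Int.abs_eq_half_of_sq_sub_sq_sq_eq_prime_sq hp (by linear_combination h)⟩)

theorem stmt14 (p : ℕ) (hp : p.Prime) (hodd : Odd p) (x y z : ℤ)
    (h : x^4 + y^4 + z^4 - 2*x^2*y^2 - 2*y^2*z^2 - 2*z^2*x^2 = (p : ℤ)^2) :
    ∃ σ : Equiv.Perm (Fin 3),
      (![|x|, |y|, |z|] ∘ σ) = ![0, ((p : ℤ) - 1) / 2, ((p : ℤ) + 1) / 2] :=
  stmt14_general p hp x y z h
end
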